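/- arXiv:2004.04215 — 2 statements merged into one kernel-verified Lean document; each statement's English description precedes it below -/
import Mathlib

section
/- The number of Deutsch paths of length 2N from (0,0) to (2N,0) equals C(3N+1, N) - 3·C(3N, N-1), which equals (1/(2N+1))·C(3N, N). -/
/-!
Write `D(n, k)` for the number of Deutsch paths of length `n` ending at level `k`, and split off
the last step of a path. A path of length `n + 1` to a level `k ≥ 0` ends either with an
up-step, after a path of length `n` to `k - 1`, or with a down-step `s ≤ -1`; raising that step to
`s + 2` is a bijection onto the paths of length `n + 1` to `k + 2`. Hence
`D(n + 1, k) = D(n, k - 1) + D(n + 1, k + 2)` with `D(n, -1) = 0`, which for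
`f(n, a) = D(n, n - 2a)` is Pascal's rule with the boundary condition `f(2a, a) = f(2a, a - 1)`.
Its solution is the ballot-type number `C(n + a, a) - 2 C(n + a, a - 1)
= C(n + a + 1, a) - 3 C(n + a, a - 1) = (n + 1 - 2a) / (n + 1) · C(n + a, a)`,
and `n = 2N`, `a = N` gives the theorem.
-/

/-- A Deutsch step: up-step 1 or a down-step -1, -3, -5, .... -/
def DeutschStep (s : ℤ) : Prop := s = 1 ∨ ∃ j : ℕ, s = -(2 * j + 1)

/-- A Deutsch path: all steps are Deutsch steps and all partial sums (heights)
are nonnegative. -/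
def IsDeutschPath (p : List ℤ) : Prop :=
  (∀ s ∈ p, DeutschStep s) ∧ ∀ m : ℕ, 0 ≤ (p.take m).sum

/-- Number of Deutsch paths from (0,0) to (n,k). -/
noncomputable def deutschCount (n k : ℕ) : ℕ :=
  Nat.card {p : List ℤ // p.length = n ∧ IsDeutschPath p ∧ p.sum = (k : ℤ)}

namespace DeutschStep

variable {s : ℤ}

theorem le_one (h : DeutschStep s) : s ≤ 1 := by
  rcases h with rfl | ⟨j, rfl⟩ <;> omega

theorem sub_two (h : DeutschStep s) : DeutschStep (s - 2) := by
  rcases h with rfl | ⟨j, rfl⟩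
  · exact Or.inr ⟨0, by norm_num⟩
  · exact Or.inr ⟨j + 1, by push_cast; ring⟩

theorem add_two (h : DeutschStep s) (hs : s ≠ 1) : DeutschStep (s + 2) := by
  rcases h with rfl | ⟨_ | j, rfl⟩
  · exact absurd rfl hs
  · exact Or.inl (by norm_num)
  · exact Or.inr ⟨j, by push_cast; ring⟩

end DeutschStep

namespace IsDeutschPath

variable {p : List ℤ}

theorem sum_nonneg (h : IsDeutschPath p) : 0 ≤ p.sum := by
  simpa using h.2 p.length

theorem sum_le_length (h : IsDeutschPath p) : p.sum ≤ p.length := by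
  simpa using p.sum_le_card_nsmul 1 fun s hs => (h.1 s hs).le_one

end IsDeutschPath

theorem isDeutschPath_append_singleton {q : List ℤ} {s : ℤ} :
    IsDeutschPath (q ++ [s]) ↔ IsDeutschPath q ∧ DeutschStep s ∧ 0 ≤ q.sum + s := by
  have take_sum (m : ℕ) :
      ((q ++ [s]).take m).sum = (q.take m).sum + if q.length < m then s else 0 := by
    rw [List.take_append, List.sum_append]
    rcases Nat.lt_or_ge q.length m with h | h
    · obtain ⟨j, rfl⟩ := Nat.exists_eq_add_of_lt h
      simp [show q.length + j + 1 - q.length = j + 1 by omega]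
    · simp [Nat.sub_eq_zero_of_le h, Nat.not_lt.2 h]
  simp only [IsDeutschPath, List.mem_append, List.mem_singleton, take_sum]
  constructor
  · rintro ⟨hsteps, hheight⟩
    refine ⟨⟨fun x hx => hsteps x (.inl hx), fun m => ?_⟩, hsteps s (.inr rfl), ?_⟩
    · rcases Nat.lt_or_ge q.length m with h | h
      · simpa [List.take_of_length_le h.le] using hheight q.length
      · simpa [Nat.not_lt.2 h] using hheight m
    · simpa [List.take_of_length_le] using hheight (q.length + 1)
  · rintro ⟨⟨hsteps, hheight⟩, hs, hsum⟩
    refine ⟨fun x hx => hx.elim (hsteps x) (· ▸ hs), fun m => ?_⟩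
    split_ifs with h
    · simpa [List.take_of_length_le h.le] using hsum
    · simpa using hheight m

def deutschPaths (n : ℕ) (k : ℤ) : Set (List ℤ) :=
  {p | p.length = n ∧ IsDeutschPath p ∧ p.sum = k}

theorem deutschCount_eq_ncard (n k : ℕ) : deutschCount n k = (deutschPaths n k).ncard := rfl

theorem deutschPaths_zero_zero : deutschPaths 0 0 = {[]} := by
  ext p
  simp only [deutschPaths, Set.mem_ofPred_eq, Set.mem_singleton_iff, List.length_eq_zero_iff]
  constructor
  · exact fun h => h.1
  · rintro rfl
    exact ⟨rfl, ⟨by simp, by simp⟩, rfl⟩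

theorem deutschPaths_eq_empty_of_neg {n : ℕ} {k : ℤ} (hk : k < 0) : deutschPaths n k = ∅ :=
  Set.eq_empty_of_forall_notMem fun _ ⟨_, hp, hsum⟩ => by linarith [hp.sum_nonneg]

theorem deutschPaths_eq_empty_of_lt {n : ℕ} {k : ℤ} (hk : n < k) : deutschPaths n k = ∅ :=
  Set.eq_empty_of_forall_notMem fun _ ⟨hlen, hp, hsum⟩ => by
    linarith [hlen ▸ hsum ▸ hp.sum_le_length]

theorem append_singleton_mem_deutschPaths {n : ℕ} {k : ℤ} {q : List ℤ} {s : ℤ} :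
    q ++ [s] ∈ deutschPaths (n + 1) k ↔
      q ∈ deutschPaths n (k - s) ∧ DeutschStep s ∧ 0 ≤ k := by
  simp only [deutschPaths, Set.mem_ofPred_eq, isDeutschPath_append_singleton, List.length_append,
    List.length_singleton, Nat.add_right_cancel_iff, List.sum_append, List.sum_singleton,
    eq_sub_iff_add_eq]
  constructor
  · rintro ⟨hlen, ⟨hq, hs, hk⟩, rfl⟩
    exact ⟨⟨hlen, hq, rfl⟩, hs, hk⟩
  · rintro ⟨⟨hlen, hq, rfl⟩, hs, hk⟩
    exact ⟨hlen, ⟨hq, hs, hk⟩, rfl⟩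

theorem mem_deutschPaths_succ {n : ℕ} {k : ℤ} {p : List ℤ} :
    p ∈ deutschPaths (n + 1) k ↔
      ∃ q s, p = q ++ [s] ∧ q ∈ deutschPaths n (k - s) ∧ DeutschStep s ∧ 0 ≤ k := by
  constructor
  · intro hp
    rcases p.eq_nil_or_concat' with rfl | ⟨q, s, rfl⟩
    · exact absurd hp.1 (by simp)
    · exact ⟨q, s, rfl, append_singleton_mem_deutschPaths.1 hp⟩
  · rintro ⟨q, s, rfl, h⟩
    exact append_singleton_mem_deutschPaths.2 h

theorem finite_deutschPaths (n : ℕ) (k : ℤ) : (deutschPaths n k).Finite := by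
  induction n generalizing k with
  | zero =>
    refine (Set.finite_singleton []).subset fun p hp => ?_
    simpa using hp.1
  | succ n ih =>
    refine ((Set.finite_Icc (k - n) 1).biUnion fun s _ => (ih (k - s)).image (· ++ [s])).subset ?_
    intro p hp
    obtain ⟨q, s, rfl, hq, hs, -⟩ := mem_deutschPaths_succ.1 hp
    have : k - s ≤ n := hq.1 ▸ hq.2.2 ▸ hq.2.1.sum_le_length
    exact Set.mem_biUnion (x := s) ⟨by linarith, hs.le_one⟩ ⟨q, hq, rfl⟩

theorem deutschPaths_succ_eq_union {n : ℕ} {k : ℤ} (hk : 0 ≤ k) :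
    deutschPaths (n + 1) k =
      (· ++ [1]) '' deutschPaths n (k - 1) ∪
        List.modifyLast (· - 2) '' deutschPaths (n + 1) (k + 2) := by
  ext p
  simp only [Set.mem_union, Set.mem_image, mem_deutschPaths_succ]
  constructor
  · rintro ⟨q, s, rfl, hq, hs, -⟩
    by_cases h1 : s = 1
    · subst h1
      exact .inl ⟨q, hq, rfl⟩
    · refine .inr ⟨q ++ [s + 2], ⟨q, s + 2, rfl, ?_, hs.add_two h1, by linarith⟩, ?_⟩
      · rwa [show k + 2 - (s + 2) = k - s by ring]
      · simp [List.modifyLast_concat]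
  · rintro (⟨q, hq, rfl⟩ | ⟨_, ⟨q, s, rfl, hq, hs, -⟩, rfl⟩)
    · exact ⟨q, 1, rfl, hq, .inl rfl, hk⟩
    · refine ⟨q, s - 2, List.modifyLast_concat _ _ _, ?_, hs.sub_two, hk⟩
      rwa [show k - (s - 2) = k + 2 - s by ring]

theorem ncard_deutschPaths_succ {n : ℕ} {k : ℤ} (hk : 0 ≤ k) :
    (deutschPaths (n + 1) k).ncard =
      (deutschPaths n (k - 1)).ncard + (deutschPaths (n + 1) (k + 2)).ncard := by
  have lower_injOn : Set.InjOn (List.modifyLast (· - 2)) (deutschPaths (n + 1) (k + 2)) := by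
    intro p hp p' hp' h
    obtain ⟨q, s, rfl, -⟩ := mem_deutschPaths_succ.1 hp
    obtain ⟨q', s', rfl, -⟩ := mem_deutschPaths_succ.1 hp'
    simp only [List.modifyLast_concat, List.append_singleton_inj, sub_left_inj] at h
    rw [h.1, h.2]
  have disjoint : Disjoint ((· ++ [1]) '' deutschPaths n (k - 1))
      (List.modifyLast (· - 2) '' deutschPaths (n + 1) (k + 2)) := by
    refine Set.disjoint_left.2 ?_
    rintro _ ⟨q, -, rfl⟩ ⟨_, hp, h⟩
    obtain ⟨q', s, rfl, -, hs, -⟩ := mem_deutschPaths_succ.1 hp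
    simp only [List.modifyLast_concat, List.append_singleton_inj] at h
    linarith [hs.le_one]
  rw [deutschPaths_succ_eq_union hk, Set.ncard_union_eq disjoint
      ((finite_deutschPaths _ _).image _) ((finite_deutschPaths _ _).image _),
    Set.ncard_image_of_injective _ (List.append_left_injective _), lower_injOn.ncard_image]

/-- The ballot-type number `C(n + a, a) - 2 C(n + a, a - 1)`; writing `C(n + a, n + 1)` for
`C(n + a, a - 1)` avoids truncated subtraction at `a = 0`. -/
def deutschBallot (n a : ℕ) : ℤ := (n + a).choose a - 2 * (n + a).choose (n + 1)

theorem deutschBallot_zero_right (n : ℕ) : deutschBallot n 0 = 1 := by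
  simp [deutschBallot]

theorem deutschBallot_succ_succ (n a : ℕ) :
    deutschBallot (n + 1) (a + 1) = deutschBallot n (a + 1) + deutschBallot (n + 1) a := by
  have h₁ := Nat.choose_succ_succ (n + a + 1) a
  have h₂ := Nat.choose_succ_succ (n + a + 1) (n + 1)
  simp only [deutschBallot, show n + 1 + (a + 1) = n + a + 1 + 1 by ring,
    show n + (a + 1) = n + a + 1 by ring, show n + 1 + a = n + a + 1 by ring, h₁, h₂]
  push_cast
  ring

theorem deutschBallot_mul_succ (n a : ℕ) :
    deutschBallot n a * (n + 1) = (n + a).choose a * (n + 1 - 2 * a) := by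
  have h := Nat.choose_succ_right_eq (n + a) n
  rw [Nat.add_sub_cancel_left, Nat.choose_symm_add] at h
  have h' : ((n + a).choose (n + 1) : ℤ) * (n + 1) = (n + a).choose a * a := by exact_mod_cast h
  simp only [deutschBallot]
  linear_combination (-2 : ℤ) * h'

theorem deutschBallot_reflect (a : ℕ) :
    deutschBallot (2 * a + 2) (a + 1) = deutschBallot (2 * a + 2) a := by
  have h : (3 * a + 3).choose (a + 1) = 3 * (3 * a + 2).choose a :=
    Nat.eq_of_mul_eq_mul_right a.succ_pos <| by
      rw [← Nat.add_one_mul_choose_eq, Nat.succ_eq_add_one]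
      ring
  refine mul_right_cancel₀ (b := ((2 * a + 2 : ℕ) : ℤ) + 1) (by positivity) ?_
  rw [deutschBallot_mul_succ, deutschBallot_mul_succ,
    show 2 * a + 2 + (a + 1) = 3 * a + 3 by ring, show 2 * a + 2 + a = 3 * a + 2 by ring, h]
  push_cast
  ring

theorem deutschBallot_succ_right (n a : ℕ) :
    deutschBallot n (a + 1) = (n + a + 2).choose (a + 1) - 3 * (n + a + 1).choose a := by
  have pascal := Nat.choose_succ_succ (n + a + 1) a
  have symm : (n + a + 1).choose (n + 1) = (n + a + 1).choose a :=
    Nat.choose_symm_of_eq_add (by ring)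
  simp only [deutschBallot, show n + (a + 1) = n + a + 1 by ring, symm, pascal]
  push_cast
  ring

theorem ncard_deutschPaths {n a : ℕ} {k : ℤ} (hk : 0 ≤ k) (h : k + 2 * a = n) :
    (deutschPaths n k).ncard = deutschBallot n a := by
  induction n generalizing a k with
  | zero =>
    obtain ⟨rfl, rfl⟩ : a = 0 ∧ k = 0 := by omega
    simp [deutschPaths_zero_zero, deutschBallot_zero_right]
  | succ n ihn =>
    induction a generalizing k with
    | zero =>
      obtain rfl : k = n + 1 := by omega
      rw [ncard_deutschPaths_succ hk, deutschPaths_eq_empty_of_lt (k := n + 1 + 2) (by omega),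
        Set.ncard_empty, add_zero, add_sub_cancel_right, ihn (a := 0) (Nat.cast_nonneg n) (by ring),
        deutschBallot_zero_right, deutschBallot_zero_right]
    | succ a iha =>
      rw [ncard_deutschPaths_succ hk, Nat.cast_add, iha (by omega) (by push_cast at h ⊢; omega)]
      rcases hk.eq_or_lt with rfl | hk
      · obtain rfl : n = 2 * a + 1 := by omega
        rw [deutschPaths_eq_empty_of_neg (by norm_num), Set.ncard_empty, Nat.cast_zero,
          zero_add, deutschBallot_reflect]
      · rw [ihn (a := a + 1) (by omega) (by push_cast at h ⊢; omega), deutschBallot_succ_succ]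

/-- The number of Deutsch paths of length 2N ending at level 0 is
C(3N+1, N) - 3·C(3N, N-1), which equals (1/(2N+1))·C(3N, N). -/
theorem deutschCount_level_zero (N : ℕ) :
    (deutschCount (2 * N) 0 : ℤ) =
        ((3 * N + 1).choose N : ℤ) -
          3 * (if 1 ≤ N then ((3 * N).choose (N - 1) : ℤ) else 0) ∧
      deutschCount (2 * N) 0 * (2 * N + 1) = (3 * N).choose N := by
  have hcount : (deutschCount (2 * N) 0 : ℤ) = deutschBallot (2 * N) N := by
    rw [deutschCount_eq_ncard]
    exact ncard_deutschPaths le_rfl (by push_cast; ring)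
  refine ⟨?_, ?_⟩
  · rw [hcount]
    rcases N with _ | M
    · simp [deutschBallot_zero_right]
    · rw [deutschBallot_succ_right, if_pos (by omega), Nat.add_sub_cancel]
      ring_nf
  · have h := deutschBallot_mul_succ (2 * N) N
    rw [← hcount, show 2 * N + N = 3 * N by ring] at h
    push_cast at h
    zify
    linear_combination h
end

section
/- Let t = t(z) be the formal power series with t(1-t)^2 = z^2, t(0)=0. Then Σ_{i≥0} i · f_i(z) · g_i(z) = t(1+3t)/((1-t)(1-3t)^2), where f_i(z) = z^i/(1-t)^{i+1} is the generating function of Deutsch paths ending at level i, and g_i(z) is the generating function of reversed Deutsch paths ending at level i, given by g_i = (t/(2(1-t)^{i+1}))(μ2^i + μ3^i) - (z(t-2)/(2(1-t)^{i+2}))·(μ2^i - μ3^i)/(μ2 - μ3), with μ2 μ3 = t-1 and μ2 + μ3 = z/(1-t). -/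
/-- A reversed Deutsch step: an up-step 1, 3, 5, ... or the down-step -1. -/
def RevDeutschStep (s : ℤ) : Prop := s = -1 ∨ ∃ j : ℕ, s = 2 * j + 1

/-- A reversed Deutsch path: all steps are reversed Deutsch steps and all
partial sums (heights) are nonnegative. -/
def IsRevDeutschPath (p : List ℤ) : Prop :=
  (∀ s ∈ p, RevDeutschStep s) ∧ ∀ m : ℕ, 0 ≤ (p.take m).sum

/-- Number of reversed Deutsch paths from (0,0) to (n,k). -/
noncomputable def revDeutschCount (n k : ℕ) : ℕ :=
  Nat.card {p : List ℤ // p.length = n ∧ IsRevDeutschPath p ∧ p.sum = (k : ℤ)}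

/-!
Removing the last step of a path gives recurrences in the length for both counts. Put
`w = 1/(1-t)`, so that `w = 1 + z²w³` and `t = z²w²`. The series `f_k = z^k w^(k+1)` and the
series `g_k` determined by `g_0 = w`, `g_1 = z w³` and
`(1-t) g_(k+2) = z w g_(k+1) + g_k - [k = 0]` satisfy the same recurrences, so they are the
generating functions. The products `P_k = f_k g_k` then satisfy
`(1-t) P_(k+3) = t P_(k+2) + t P_(k+1)`; summing this recurrence with weights `1` and `k`
(the series converge `z`-adically) gives `Σ k P_k` in terms of `P_1` and `P_2`.
-/

open PowerSeries

section LinearRecurrence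

variable {R : Type*} [CommRing R] [TopologicalSpace R] [IsTopologicalRing R] [T2Space R]
  {e : ℕ → R} {a b c E V : R}

theorem HasSum.recurrence_sum_eq (hE : HasSum e E)
    (hrec : ∀ k, a * e (k + 2) = b * e (k + 1) + c * e k) :
    (a - b - c) * E = a * (e 0 + e 1) - b * e 0 := by
  have shifted := (((hasSum_nat_add_iff' 1).2 hE).mul_left b).add (hE.mul_left c)
  simp_rw [← hrec] at shifted
  have := (((hasSum_nat_add_iff' 2).2 hE).mul_left a).unique shifted
  simp only [Finset.sum_range_succ, Finset.sum_range_zero] at this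
  linear_combination this

theorem HasSum.recurrence_weighted_sum_eq (hE : HasSum e E)
    (hV : HasSum (fun k : ℕ => (k : R) * e k) V)
    (hrec : ∀ k, a * e (k + 2) = b * e (k + 1) + c * e k) :
    (a - b - c) * V = (b + 2 * c) * E + a * e 1 - b * e 0 := by
  have shifted : HasSum (fun k : ℕ => a * (((k + 2 : ℕ) : R) * e (k + 2)))
      (b * (V - ∑ i ∈ Finset.range 1, (i : R) * e i) + b * (E - ∑ i ∈ Finset.range 1, e i) +
        c * V + 2 * c * E) := by
    refine (((((hasSum_nat_add_iff' 1).2 hV).mul_left b).add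
      (((hasSum_nat_add_iff' 1).2 hE).mul_left b)).add (hV.mul_left c)).add
      (hE.mul_left (2 * c)) |>.congr_fun fun k => ?_
    push_cast
    linear_combination ((k : R) + 2) * hrec k
  have := (((hasSum_nat_add_iff' 2).2 hV).mul_left a).unique shifted
  simp only [Finset.sum_range_succ, Finset.sum_range_zero] at this
  push_cast at this
  linear_combination this

end LinearRecurrence

open scoped PowerSeries.WithPiTopology in
theorem PowerSeries.hasSum_of_X_pow_dvd {R : Type*} [CommSemiring R] [TopologicalSpace R]
    {F : ℕ → R⟦X⟧} (hF : ∀ k, X ^ k ∣ F k) :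
    HasSum F (mk fun n => ∑ k ∈ Finset.range (n + 1), coeff n (F k)) := by
  rw [WithPiTopology.hasSum_iff_hasSum_coeff]
  intro n
  rw [coeff_mk]
  exact hasSum_sum_of_ne_finset_zero fun k hk =>
    X_pow_dvd_iff.1 (hF k) n (by simpa using hk)

section NonnegPaths

variable (St : ℤ → Prop)

def IsNonnegPath (p : List ℤ) : Prop :=
  (∀ s ∈ p, St s) ∧ ∀ m : ℕ, 0 ≤ (p.take m).sum

abbrev NonnegPaths (n : ℕ) (k : ℤ) : Type :=
  {p : List ℤ // p.length = n ∧ IsNonnegPath St p ∧ p.sum = k}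

noncomputable def pathCount (n : ℕ) (k : ℤ) : ℕ := Nat.card (NonnegPaths St n k)

def IsLastStepCover (n k : ℕ) (S : Finset ℤ) : Prop :=
  (∀ s ∈ S, St s) ∧ ∀ s, St s → Nonempty (NonnegPaths St n (k - s)) → s ∈ S

variable {St}

theorem IsNonnegPath.sum_nonneg {p : List ℤ} (h : IsNonnegPath St p) : 0 ≤ p.sum := by
  simpa using h.2 p.length

theorem isNonnegPath_append_singleton {q : List ℤ} {s : ℤ} :
    IsNonnegPath St (q ++ [s]) ↔ IsNonnegPath St q ∧ St s ∧ 0 ≤ q.sum + s := by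
  have take_eq : ∀ m, (q ++ [s]).take m = if m ≤ q.length then q.take m else q ++ [s] := by
    intro m
    split_ifs with hm
    · exact List.take_append_of_le_length hm
    · exact List.take_of_length_le (by simp; omega)
  simp only [IsNonnegPath, List.mem_append, List.mem_singleton, take_eq]
  constructor
  · rintro ⟨hSt, hm⟩
    refine ⟨⟨fun x hx => hSt x (.inl hx), fun m => ?_⟩, hSt s (.inr rfl),
      by simpa using hm (q.length + 1)⟩
    rcases le_or_gt m q.length with h | h
    · simpa [h] using hm m
    · simpa [List.take_of_length_le h.le] using hm q.length
  · rintro ⟨⟨hSt, hm⟩, hs, hsum⟩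
    refine ⟨fun x hx => hx.elim (hSt x) (· ▸ hs), fun m => ?_⟩
    split_ifs
    · exact hm m
    · simpa using hsum

theorem pathCount_of_neg {n : ℕ} {k : ℤ} (hk : k < 0) : pathCount St n k = 0 :=
  have : IsEmpty (NonnegPaths St n k) := ⟨fun p => by linarith [p.2.2.1.sum_nonneg, p.2.2.2]⟩
  Nat.card_of_isEmpty

theorem pathCount_zero (k : ℕ) : pathCount St 0 k = if k = 0 then 1 else 0 := by
  split_ifs with hk
  · subst hk
    have : Unique (NonnegPaths St 0 0) :=
      ⟨⟨⟨[], rfl, ⟨by simp, by simp⟩, rfl⟩⟩,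
        fun p => Subtype.ext (List.eq_nil_of_length_eq_zero p.2.1)⟩
    exact Nat.card_unique
  · have : IsEmpty (NonnegPaths St 0 k) := ⟨fun p => by
      have := p.2.2.2
      rw [List.eq_nil_of_length_eq_zero p.2.1, List.sum_nil] at this
      omega⟩
    exact Nat.card_of_isEmpty

variable {n k : ℕ} {S : Finset ℤ}

def lastStepEquiv (hS : IsLastStepCover St n k S) :
    NonnegPaths St (n + 1) k ≃ Σ s : S, NonnegPaths St n (k - s) where
  toFun p :=
    have hne : p.1 ≠ [] := fun h => by simpa [h] using p.2.1
    have hp : IsNonnegPath St (p.1.dropLast ++ [p.1.getLast hne]) := by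
      rw [List.dropLast_append_getLast]; exact p.2.2.1
    have hsum : p.1.dropLast.sum = k - p.1.getLast hne := by
      have := congrArg List.sum (List.dropLast_append_getLast hne)
      rw [List.sum_append, List.sum_singleton, p.2.2.2] at this
      exact eq_sub_of_add_eq this
    let q : NonnegPaths St n (k - p.1.getLast hne) :=
      ⟨p.1.dropLast, by simp [p.2.1], (isNonnegPath_append_singleton.1 hp).1, hsum⟩
    ⟨⟨_, hS.2 _ (isNonnegPath_append_singleton.1 hp).2.1 ⟨q⟩⟩, q⟩
  invFun q :=
    ⟨q.2.1 ++ [q.1.1], by simp [q.2.2.1],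
      isNonnegPath_append_singleton.2 ⟨q.2.2.2.1, hS.1 _ q.1.2, by simp [q.2.2.2.2]⟩,
      by simp [q.2.2.2.2]⟩
  left_inv p := Subtype.ext (List.dropLast_append_getLast _)
  right_inv q :=
    Sigma.subtype_ext (Subtype.ext (List.getLast_concat ..)) (List.dropLast_concat ..)

theorem pathCount_succ [∀ k : ℤ, Finite (NonnegPaths St n k)] (hS : IsLastStepCover St n k S) :
    pathCount St (n + 1) k = ∑ s ∈ S, pathCount St n (k - s) := by
  rw [pathCount, Nat.card_congr (lastStepEquiv hS), Nat.card_sigma]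
  exact S.sum_coe_sort fun s => pathCount St n (k - s)

theorem finite_nonnegPaths (hcover : ∀ n k : ℕ, ∃ S, IsLastStepCover St n k S) :
    ∀ (n : ℕ) (k : ℤ), Finite (NonnegPaths St n k)
  | 0, _ => Finite.of_injective (fun _ => ()) fun p q _ => Subtype.ext <| by
      rw [List.eq_nil_of_length_eq_zero p.2.1, List.eq_nil_of_length_eq_zero q.2.1]
  | n + 1, k => by
    have := finite_nonnegPaths hcover n
    rcases lt_or_ge k 0 with hk | hk
    · have : IsEmpty (NonnegPaths St (n + 1) k) :=
        ⟨fun p => by linarith [p.2.2.1.sum_nonneg, p.2.2.2]⟩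
      infer_instance
    · lift k to ℕ using hk
      obtain ⟨S, hS⟩ := hcover n k
      exact Finite.of_equiv _ (lastStepEquiv hS).symm

end NonnegPaths

theorem deutschCount_eq_pathCount (n k : ℕ) : deutschCount n k = pathCount DeutschStep n k :=
  rfl

theorem revDeutschCount_eq_pathCount (n k : ℕ) :
    revDeutschCount n k = pathCount RevDeutschStep n k :=
  rfl

theorem isLastStepCover_deutschStep (n k : ℕ) : IsLastStepCover DeutschStep n k
    (insert 1 ((Finset.range (n + 1)).image fun j : ℕ => -(2 * (j : ℤ) + 1))) := by
  refine ⟨fun s hs => ?_, fun s hs ⟨q⟩ => ?_⟩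
  · simp only [Finset.mem_insert, Finset.mem_image] at hs
    rcases hs with rfl | ⟨j, -, rfl⟩
    exacts [.inl rfl, .inr ⟨j, rfl⟩]
  · have sum_le : q.1.sum ≤ n := by
      have := List.sum_le_card_nsmul q.1 1 fun s hs => by
        rcases q.2.2.1.1 s hs with rfl | ⟨j, rfl⟩ <;> omega
      simpa [q.2.1] using this
    rw [q.2.2.2] at sum_le
    rcases hs with rfl | ⟨j, rfl⟩
    · exact Finset.mem_insert_self _ _
    · exact Finset.mem_insert_of_mem
        (Finset.mem_image.2 ⟨j, Finset.mem_range.2 (by omega), rfl⟩)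

theorem isLastStepCover_revDeutschStep (n k : ℕ) : IsLastStepCover RevDeutschStep n k
    (insert (-1) ((Finset.range ((k + 1) / 2)).image fun j : ℕ => 2 * (j : ℤ) + 1)) := by
  refine ⟨fun s hs => ?_, fun s hs ⟨q⟩ => ?_⟩
  · simp only [Finset.mem_insert, Finset.mem_image] at hs
    rcases hs with rfl | ⟨j, -, rfl⟩
    exacts [.inl rfl, .inr ⟨j, rfl⟩]
  · have sum_nonneg := q.2.2.1.sum_nonneg
    rw [q.2.2.2] at sum_nonneg
    rcases hs with rfl | ⟨j, rfl⟩
    · exact Finset.mem_insert_self _ _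
    · exact Finset.mem_insert_of_mem
        (Finset.mem_image.2 ⟨j, Finset.mem_range.2 (by omega), rfl⟩)

theorem deutschCount_succ (n k : ℕ) :
    deutschCount (n + 1) k = pathCount DeutschStep n (k - 1) +
      ∑ j ∈ Finset.range (n + 1), deutschCount n (k + 2 * j + 1) := by
  have := finite_nonnegPaths (fun n k => ⟨_, isLastStepCover_deutschStep n k⟩) n
  rw [deutschCount_eq_pathCount, pathCount_succ (isLastStepCover_deutschStep n k),
    Finset.sum_insert (by simp; omega), Finset.sum_image fun i _ j _ h => by simpa using h]
  refine congrArg _ (Finset.sum_congr rfl fun j _ => ?_)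
  rw [deutschCount_eq_pathCount]
  exact congrArg _ (by push_cast; ring)

theorem revDeutschCount_succ (n k : ℕ) :
    revDeutschCount (n + 1) k = revDeutschCount n (k + 1) +
      ∑ j ∈ Finset.range ((k + 1) / 2), revDeutschCount n (k - (2 * j + 1)) := by
  have := finite_nonnegPaths (fun n k => ⟨_, isLastStepCover_revDeutschStep n k⟩) n
  rw [revDeutschCount_eq_pathCount, pathCount_succ (isLastStepCover_revDeutschStep n k),
    Finset.sum_insert (by simp; omega), Finset.sum_image fun i _ j _ h => by simpa using h]
  refine congrArg₂ _ ?_ (Finset.sum_congr rfl fun j hj => ?_)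
  · rw [revDeutschCount_eq_pathCount]
    exact congrArg _ (by push_cast; ring)
  · rw [revDeutschCount_eq_pathCount]
    have : 2 * j + 1 ≤ k := by rw [Finset.mem_range] at hj; omega
    exact congrArg _ (by push_cast [this]; ring)

section GeneratingFunctions

variable {R : Type*} [CommRing R] {t w : R⟦X⟧}

noncomputable def deutschGF (w : R⟦X⟧) (k : ℕ) : R⟦X⟧ := X ^ k * w ^ (k + 1)

noncomputable def revDeutschGF (w : R⟦X⟧) : ℕ → R⟦X⟧
  | 0 => w
  | 1 => X * w ^ 3
  | k + 2 => w * (X * w * revDeutschGF w (k + 1) + revDeutschGF w k - if k = 0 then 1 else 0)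

theorem deutschGF_tail (hw : w = 1 + X ^ 2 * w ^ 3) (k J : ℕ) :
    X ^ (k + 1) * w ^ (k + 3) = ∑ j ∈ Finset.range J, deutschGF w (k + 2 * j + 1) +
      X ^ (k + 2 * J + 1) * w ^ (k + 2 * J + 3) := by
  induction J with
  | zero => simp
  | succ J ih =>
    rw [Finset.sum_range_succ, ih, deutschGF]
    linear_combination (X ^ (k + 2 * J + 1) * w ^ (k + 2 * J + 2)) * hw

theorem deutschGF_eq (hw : w = 1 + X ^ 2 * w ^ 3) (k : ℕ) :
    deutschGF w k = (if k = 0 then 1 else X * deutschGF w (k - 1)) +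
      X * (X ^ (k + 1) * w ^ (k + 3)) := by
  cases k with
  | zero =>
    simp only [deutschGF, if_pos]
    linear_combination hw
  | succ k =>
    simp only [deutschGF, if_neg k.succ_ne_zero, Nat.add_sub_cancel]
    linear_combination (X ^ (k + 1) * w ^ (k + 1)) * hw

theorem coeff_succ_deutschGF (hw : w = 1 + X ^ 2 * w ^ 3) (n k : ℕ) :
    coeff (n + 1) (deutschGF w k) = (if k = 0 then 0 else coeff n (deutschGF w (k - 1))) +
      ∑ j ∈ Finset.range (n + 1), coeff n (deutschGF w (k + 2 * j + 1)) := by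
  have tail_vanishes :
      coeff n (X ^ (k + 2 * (n + 1) + 1) * w ^ (k + 2 * (n + 1) + 3)) = 0 := by
    rw [coeff_X_pow_mul', if_neg (by omega)]
  rw [deutschGF_eq hw, map_add, coeff_succ_X_mul, deutschGF_tail hw k (n + 1), map_add, map_sum,
    tail_vanishes, add_zero]
  split_ifs <;> simp [coeff_one, coeff_succ_X_mul]

theorem deutschCount_eq_coeff (hw : w = 1 + X ^ 2 * w ^ 3) :
    ∀ n k, (deutschCount n k : R) = coeff n (deutschGF w k)
  | 0, k => by
    rw [deutschGF_eq hw, deutschCount_eq_pathCount, pathCount_zero]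
    cases k <;> simp
  | n + 1, k => by
    rw [coeff_succ_deutschGF hw, deutschCount_succ, Nat.cast_add, Nat.cast_sum]
    congr 1
    · cases k with
      | zero => simp [pathCount_of_neg]
      | succ k => simpa [deutschCount_eq_pathCount] using deutschCount_eq_coeff hw n k
    · exact Finset.sum_congr rfl fun j _ => deutschCount_eq_coeff hw n _

theorem mk_deutschCount (hw : w = 1 + X ^ 2 * w ^ 3) (k : ℕ) :
    mk (fun n => (deutschCount n k : R)) = deutschGF w k :=
  ext fun n => by rw [coeff_mk, deutschCount_eq_coeff hw]

theorem revDeutschGF_eq (hw : w = 1 + X ^ 2 * w ^ 3) : ∀ k, revDeutschGF w k =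
    (if k = 0 then 1 else 0) + X * revDeutschGF w (k + 1) +
      X * ∑ j ∈ Finset.range ((k + 1) / 2), revDeutschGF w (k - (2 * j + 1))
  | 0 => by
    simp only [revDeutschGF, if_pos]
    linear_combination hw
  | 1 => by
    simp [revDeutschGF]
    linear_combination (X * w ^ 2) * hw
  | k + 2 => by
    have odd_sum : ∑ j ∈ Finset.range ((k + 2 + 1) / 2), revDeutschGF w (k + 2 - (2 * j + 1)) =
        revDeutschGF w (k + 1) +
          ∑ j ∈ Finset.range ((k + 1) / 2), revDeutschGF w (k - (2 * j + 1)) := by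
      rw [show (k + 2 + 1) / 2 = (k + 1) / 2 + 1 by omega, Finset.sum_range_succ', add_comm]
      congr 1
      refine Finset.sum_congr rfl fun j _ => ?_
      congr 1
      omega
    have h2 : revDeutschGF w (k + 2) =
        w * (X * w * revDeutschGF w (k + 1) + revDeutschGF w k - if k = 0 then 1 else 0) := by
      rw [revDeutschGF]
    have h3 : revDeutschGF w (k + 3) =
        w * (X * w * revDeutschGF w (k + 2) + revDeutschGF w (k + 1)) := by
      rw [revDeutschGF, if_neg k.succ_ne_zero, sub_zero]
    rw [odd_sum, if_neg (by omega), h3]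
    linear_combination revDeutschGF_eq hw k + (1 - X ^ 2 * w ^ 2) * h2 +
      (X * w * revDeutschGF w (k + 1) + revDeutschGF w k - if k = 0 then 1 else 0) * hw

theorem coeff_succ_revDeutschGF (hw : w = 1 + X ^ 2 * w ^ 3) (n k : ℕ) :
    coeff (n + 1) (revDeutschGF w k) = coeff n (revDeutschGF w (k + 1)) +
      ∑ j ∈ Finset.range ((k + 1) / 2), coeff n (revDeutschGF w (k - (2 * j + 1))) := by
  rw [revDeutschGF_eq hw, map_add, map_add, coeff_succ_X_mul, coeff_succ_X_mul, map_sum]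
  split_ifs <;> simp [coeff_one]

theorem revDeutschCount_eq_coeff (hw : w = 1 + X ^ 2 * w ^ 3) :
    ∀ n k, (revDeutschCount n k : R) = coeff n (revDeutschGF w k)
  | 0, k => by
    rw [revDeutschGF_eq hw, revDeutschCount_eq_pathCount, pathCount_zero]
    cases k <;> simp
  | n + 1, k => by
    rw [coeff_succ_revDeutschGF hw, revDeutschCount_succ, Nat.cast_add, Nat.cast_sum,
      revDeutschCount_eq_coeff hw n]
    exact congrArg _ (Finset.sum_congr rfl fun j _ => revDeutschCount_eq_coeff hw n _)

theorem mk_revDeutschCount (hw : w = 1 + X ^ 2 * w ^ 3) (k : ℕ) :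
    mk (fun n => (revDeutschCount n k : R)) = revDeutschGF w k :=
  ext fun n => by rw [coeff_mk, revDeutschCount_eq_coeff hw]

theorem deutschGF_mul_revDeutschGF_recurrence (hw : w = 1 + X ^ 2 * w ^ 3) (k : ℕ) :
    (1 - X ^ 2 * w ^ 2) * (deutschGF w (k + 3) * revDeutschGF w (k + 3)) =
      X ^ 2 * w ^ 2 * (deutschGF w (k + 2) * revDeutschGF w (k + 2)) +
        X ^ 2 * w ^ 2 * (deutschGF w (k + 1) * revDeutschGF w (k + 1)) := by
  have h3 : revDeutschGF w (k + 3) =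
      w * (X * w * revDeutschGF w (k + 2) + revDeutschGF w (k + 1)) := by
    rw [revDeutschGF, if_neg k.succ_ne_zero, sub_zero]
  rw [h3, deutschGF, deutschGF, deutschGF]
  linear_combination (X ^ (k + 3) * w ^ (k + 4) *
    (X * w * revDeutschGF w (k + 2) + revDeutschGF w (k + 1))) * hw

theorem one_sub_mul_deutschGF_mul_revDeutschGF_one (hw : (1 - t) * w = 1) (ht : t = X ^ 2 * w ^ 2) :
    (1 - t) * (deutschGF w 1 * revDeutschGF w 1) = t * w ^ 2 := by
  rw [show deutschGF w 1 * revDeutschGF w 1 = t * w ^ 2 * w by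
    simp only [deutschGF, revDeutschGF]; rw [ht]; ring]
  linear_combination (t * w ^ 2) * hw

theorem one_sub_mul_deutschGF_mul_revDeutschGF_two (hw : (1 - t) * w = 1) (ht : t = X ^ 2 * w ^ 2) :
    (1 - t) * (deutschGF w 2 * revDeutschGF w 2) = t * w * (t * w ^ 2 + w - 1) := by
  rw [show deutschGF w 2 * revDeutschGF w 2 = t * w * (t * w ^ 2 + w - 1) * w by
    simp only [deutschGF, revDeutschGF, if_pos]; rw [ht]; ring]
  linear_combination (t * w * (t * w ^ 2 + w - 1)) * hw

open scoped PowerSeries.WithPiTopology in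
theorem deutschGF_area_identity (hw : (1 - t) * w = 1) (ht : t = X ^ 2 * w ^ 2) :
    (mk fun n => ∑ i ∈ Finset.range (n + 1),
        (i : R) * coeff n (deutschGF w i * revDeutschGF w i)) * ((1 - t) * (1 - 3 * t) ^ 2) =
      t * (1 + 3 * t) := by
  -- The topology on `R` is auxiliary: every coefficient of the sums below is a finite sum.
  let _ : TopologicalSpace R := ⊥
  have _ : DiscreteTopology R := ⟨rfl⟩
  have hw3 : w = 1 + X ^ 2 * w ^ 3 := by linear_combination hw + w * ht
  set P : ℕ → R⟦X⟧ := fun k => deutschGF w k * revDeutschGF w k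
  have hP : ∀ k, X ^ k ∣ P k := fun k => Dvd.intro (w ^ (k + 1) * revDeutschGF w k) <| by
    simp only [P, deutschGF]; ring
  have hP' : ∀ k, X ^ k ∣ P (k + 1) := fun k => (pow_dvd_pow X k.le_succ).trans (hP (k + 1))
  set L := mk fun n => ∑ i ∈ Finset.range (n + 1), (i : R) * coeff n (P i)
  have hL : HasSum (fun k : ℕ => (k : R⟦X⟧) * P k) L := by
    simpa only [← map_natCast C, coeff_C_mul] using
      hasSum_of_X_pow_dvd fun k => (hP k).mul_left (k : R⟦X⟧)
  obtain ⟨E, hE⟩ : ∃ E, HasSum (fun k => P (k + 1)) E := ⟨_, hasSum_of_X_pow_dvd hP'⟩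
  obtain ⟨V, hV⟩ : ∃ V, HasSum (fun k : ℕ => (k : R⟦X⟧) * P (k + 1)) V :=
    ⟨_, hasSum_of_X_pow_dvd fun k => (hP' k).mul_left _⟩
  have hLVE : L = V + E := by
    have := ((hasSum_nat_add_iff' 1).2 hL).unique <|
      (hV.add hE).congr_fun fun k => by push_cast; ring
    simpa using this
  have hrec : ∀ k, (1 - t) * P (k + 1 + 2) = t * P (k + 1 + 1) + t * P (k + 1) := fun k => by
    rw [ht]; exact deutschGF_mul_revDeutschGF_recurrence hw3 k
  have hE_eq := hE.recurrence_sum_eq hrec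
  have hV_eq := hE.recurrence_weighted_sum_eq hV hrec
  have hP1 : (1 - t) * P 1 = t * w ^ 2 := one_sub_mul_deutschGF_mul_revDeutschGF_one hw ht
  have hP2 : (1 - t) * P 2 = t * w * (t * w ^ 2 + w - 1) :=
    one_sub_mul_deutschGF_mul_revDeutschGF_two hw ht
  calc L * ((1 - t) * (1 - 3 * t) ^ 2)
      = (1 - t) * ((1 - t) * (P 1 + P 2) - t * P 1 +
          (1 - 3 * t) * ((1 - t) * P 2 - t * P 1)) := by
        rw [hLVE]
        linear_combination (1 - t) * (1 - 3 * t) * hV_eq + (1 - t) * hE_eq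
    _ = t * (1 + 3 * t) := by
        linear_combination (1 - 3 * t + 3 * t ^ 2) * hP1 + (1 - t) * (2 - 3 * t) * hP2 +
          (t * w + (2 - 3 * t) * t * (t * w ^ 2 + w - 1) + 3 * t) * hw

end GeneratingFunctions

/-- With t the power series solution of t(1-t)² = z², t(0) = 0,
the cumulative area generating function Σ_{i≥0} i·f_i(z)·g_i(z) equals
t(1+3t)/((1-t)(1-3t)²).  Here f_i (resp. g_i) is the generating function of
Deutsch (resp. reversed Deutsch) paths ending at level i; the sum over i has
finite support in each coefficient (paths reaching level i have length ≥ i),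
so its n-th coefficient is Σ_{i ≤ n} i·[zⁿ](f_i·g_i).  The identity is stated
multiplied through by (1-t)(1-3t)². -/
theorem deutsch_area_generating_function (t : PowerSeries ℚ)
    (ht : t * (1 - t) ^ 2 = PowerSeries.X ^ 2)
    (ht0 : PowerSeries.constantCoeff t = 0) :
    (PowerSeries.mk fun n =>
        ∑ i ∈ Finset.range (n + 1),
          (i : ℚ) *
            PowerSeries.coeff n
              ((PowerSeries.mk fun m => (deutschCount m i : ℚ)) *
                (PowerSeries.mk fun m => (revDeutschCount m i : ℚ)))) *
        ((1 - t) * (1 - 3 * t) ^ 2) =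
      t * (1 + 3 * t) := by
  set w := (1 - t)⁻¹
  have hw : (1 - t) * w = 1 := PowerSeries.mul_inv_cancel _ (by simp [ht0])
  have htw : t = X ^ 2 * w ^ 2 := by
    linear_combination w ^ 2 * ht - t * (1 + (1 - t) * w) * hw
  have hw3 : w = 1 + X ^ 2 * w ^ 3 := by linear_combination hw + w * htw
  simp only [mk_deutschCount hw3, mk_revDeutschCount hw3]
  exact deutschGF_area_identity hw htw
end
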